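/- arXiv:2604.13263 — 6 statements merged into one kernel-verified Lean document; each statement's English description precedes it below -/
import Mathlib

section
/- Let γ be a real number and K ≥ 1, 0 ≤ L ≤ K-1 natural numbers. Then Σ_{l=L+1}^{K} C(K, l) γ^l = γ^{L+1} Σ_{l=1}^{K-L} C(K-l, L) (1+γ)^{l-1}. -/
lemma pbse_aux (γ : ℝ) (L : ℕ) : ∀ n : ℕ,
    ∑ i ∈ Finset.range (n + 1), ((L + 1 + n).choose (L + 1 + i) : ℝ) * γ ^ (L + 1 + i)
      = γ ^ (L + 1) * ∑ i ∈ Finset.range (n + 1), ((L + n - i).choose L : ℝ) * (1 + γ) ^ i := by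
  intro n
  induction n with
  | zero => simp
  | succ n ih =>
      have h1 : ∀ i ∈ Finset.range (n + 2),
          ((L + 1 + (n + 1)).choose (L + 1 + i) : ℝ) * γ ^ (L + 1 + i)
            = ((L + 1 + n).choose (L + i) : ℝ) * γ ^ (L + 1 + i)
              + ((L + 1 + n).choose (L + 1 + i) : ℝ) * γ ^ (L + 1 + i) := by
        intro i _
        have e1 : L + 1 + (n + 1) = (L + 1 + n) + 1 := by omega
        have e2 : L + 1 + i = (L + i) + 1 := by omega
        rw [e1, e2, Nat.choose_succ_succ, Nat.succ_eq_add_one, ← e2]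
        push_cast
        ring
      rw [Finset.sum_congr rfl h1, Finset.sum_add_distrib]
      -- second piece: top term vanishes
      have h2 : ∑ i ∈ Finset.range (n + 2), ((L + 1 + n).choose (L + 1 + i) : ℝ) * γ ^ (L + 1 + i)
          = ∑ i ∈ Finset.range (n + 1), ((L + 1 + n).choose (L + 1 + i) : ℝ) * γ ^ (L + 1 + i) := by
        rw [Finset.sum_range_succ, Nat.choose_eq_zero_of_lt (by omega)]
        simp
      -- first piece: peel bottom term
      have h3 : ∑ i ∈ Finset.range (n + 2), ((L + 1 + n).choose (L + i) : ℝ) * γ ^ (L + 1 + i)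
          = γ * (∑ i ∈ Finset.range (n + 1),
              ((L + 1 + n).choose (L + 1 + i) : ℝ) * γ ^ (L + 1 + i))
            + ((L + 1 + n).choose L : ℝ) * γ ^ (L + 1) := by
        rw [Finset.sum_range_succ']
        congr 1
        · rw [Finset.mul_sum]
          refine Finset.sum_congr rfl fun i _ => ?_
          rw [show L + (i + 1) = L + 1 + i from by omega,
            show L + 1 + (i + 1) = (L + 1 + i) + 1 from by omega, pow_succ]
          ring
      -- RHS: peel bottom term
      have h4 : ∑ i ∈ Finset.range (n + 2), ((L + (n + 1) - i).choose L : ℝ) * (1 + γ) ^ i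
          = (1 + γ) * (∑ i ∈ Finset.range (n + 1), ((L + n - i).choose L : ℝ) * (1 + γ) ^ i)
            + ((L + 1 + n).choose L : ℝ) := by
        rw [Finset.sum_range_succ']
        congr 1
        · rw [Finset.mul_sum]
          refine Finset.sum_congr rfl fun i hi => ?_
          have : L + (n + 1) - (i + 1) = L + n - i := by omega
          rw [this, pow_succ]
          ring
        · rw [show L + (n + 1) - 0 = L + 1 + n from by omega]
          simp
      rw [h2, h3, h4, ih]
      ring

/-- `Σ_{l=L+1}^{K} C(K,l) γ^l = γ^{L+1} Σ_{l=1}^{K-L} C(K-l, L) (1+γ)^{l-1}`. -/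
theorem partial_binomial_sum_equiv (γ : ℝ) (K L : ℕ) (hK : 1 ≤ K) (hL : L ≤ K - 1) :
    ∑ l ∈ Finset.Icc (L + 1) K, (K.choose l : ℝ) * γ ^ l
      = γ ^ (L + 1) * ∑ l ∈ Finset.Icc 1 (K - L), ((K - l).choose L : ℝ) * (1 + γ) ^ (l - 1) := by
  obtain ⟨n, rfl⟩ : ∃ n, K = L + 1 + n := ⟨K - L - 1, by omega⟩
  rw [← Finset.Ico_add_one_right_eq_Icc, ← Finset.Ico_add_one_right_eq_Icc, Finset.sum_Ico_eq_sum_range,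
    Finset.sum_Ico_eq_sum_range]
  rw [show L + 1 + n + 1 - (L + 1) = n + 1 from by omega,
    show L + 1 + n - L + 1 - 1 = n + 1 from by omega]
  have := pbse_aux γ L n
  rw [this]
  congr 1
  refine Finset.sum_congr rfl fun i hi => ?_
  have hin : i ≤ n := by simpa using Nat.lt_succ_iff.mp (Finset.mem_range.mp hi)
  rw [show L + 1 + n - (1 + i) = L + n - i from by omega, show 1 + i - 1 = i from by omega]
end

section
/- Let H_0, ..., H_{K-1} be symmetric d×d matrices with ‖H_k‖ ≤ H, α > 0, g ∈ R^d, and 0 ≤ L ≤ K. Then ‖∏_{k=0}^{K-1}(I - α H_k) g - ∏_{k=K-L}^{K-1}(I - α H_k) g‖ ≤ [(1+αH)^K - (1+αH)^L] ‖g‖. -/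
open Matrix Finset

variable {d : ℕ}

/-- Operator (spectral) norm of a real `d × d` matrix, acting on Euclidean space. -/
noncomputable def matOpNorm (M : Matrix (Fin d) (Fin d) ℝ) : ℝ :=
  ‖Matrix.toEuclideanCLM (𝕜 := ℝ) M‖

/-- Apply a matrix to a vector of Euclidean space. -/
noncomputable def applyM (M : Matrix (Fin d) (Fin d) ℝ) (g : EuclideanSpace ℝ (Fin d)) :
    EuclideanSpace ℝ (Fin d) :=
  Matrix.toEuclideanCLM (𝕜 := ℝ) M g

/-- Ordered product `∏_{k=a}^{a+n-1} (I - α H k)`, factors ordered by increasing `k`. -/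
def mulList (H : ℕ → Matrix (Fin d) (Fin d) ℝ) (α : ℝ) (a n : ℕ) :
    Matrix (Fin d) (Fin d) ℝ :=
  ((List.range' a n).map (fun k => (1 : Matrix (Fin d) (Fin d) ℝ) - α • H k)).prod

/-- Truncated binomial expansion
`I + Σ_{l=1}^{L} Σ_{0 ≤ k₁ < … < k_l < K} ∏_{i=1}^{l} (-α H_{k_i})`,
with each inner product ordered by increasing index. -/
def binomSum (H : ℕ → Matrix (Fin d) (Fin d) ℝ) (α : ℝ) (K L : ℕ) :
    Matrix (Fin d) (Fin d) ℝ :=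
  1 + ∑ l ∈ Finset.Icc 1 L, ∑ s ∈ (Finset.range K).powersetCard l,
      ((s.sort (· ≤ ·)).map (fun k => -(α • H k))).prod

/-!
Split the full product as `P * Q` with `Q` the last `L` factors, so the error is `(P - 1) Q`.
Each factor is within `αH` of the identity, and `‖a b - 1‖ ≤ ‖a‖ ‖b - 1‖ + ‖a - 1‖` gives
`‖P - 1‖ ≤ (1 + αH)^(K-L) - 1` by induction, while `‖Q‖ ≤ (1 + αH)^L`.
-/

section ListProd

-- `‖1‖ ≤ 1` is assumed instead of `[NormOneClass R]` so that `0 × 0` matrices are covered.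
variable {R : Type*} [SeminormedRing R] {r : ℝ}

theorem List.norm_prod_sub_one_le (hone : ‖(1 : R)‖ ≤ 1) {l : List R}
    (h : ∀ a ∈ l, ‖a - 1‖ ≤ r) : ‖l.prod - 1‖ ≤ (1 + r) ^ l.length - 1 := by
  induction l with
  | nil => simp
  | cons a l ih =>
    have ha : ‖a - 1‖ ≤ r := h a List.mem_cons_self
    have hl : ‖l.prod - 1‖ ≤ (1 + r) ^ l.length - 1 := ih fun b hb ↦ h b (List.mem_cons_of_mem a hb)
    have hnorm_a : ‖a‖ ≤ 1 + r := by
      calc ‖a‖ = ‖(a - 1) + 1‖ := by rw [sub_add_cancel]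
        _ ≤ ‖a - 1‖ + ‖(1 : R)‖ := norm_add_le _ _
        _ ≤ r + 1 := add_le_add ha hone
        _ = 1 + r := add_comm r 1
    calc ‖(a :: l).prod - 1‖ = ‖a * (l.prod - 1) + (a - 1)‖ := by
          rw [List.prod_cons, mul_sub, mul_one, sub_add_sub_cancel]
      _ ≤ ‖a‖ * ‖l.prod - 1‖ + ‖a - 1‖ := (norm_add_le _ _).trans (add_le_add (norm_mul_le _ _) le_rfl)
      _ ≤ (1 + r) * ((1 + r) ^ l.length - 1) + r :=
          add_le_add (mul_le_mul hnorm_a hl (norm_nonneg _) ((norm_nonneg a).trans hnorm_a)) ha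
      _ = (1 + r) ^ (a :: l).length - 1 := by rw [List.length_cons, pow_succ]; ring

theorem List.norm_prod_le_one_add_pow (hone : ‖(1 : R)‖ ≤ 1) {l : List R}
    (h : ∀ a ∈ l, ‖a - 1‖ ≤ r) : ‖l.prod‖ ≤ (1 + r) ^ l.length := by
  calc ‖l.prod‖ = ‖(l.prod - 1) + 1‖ := by rw [sub_add_cancel]
    _ ≤ ‖l.prod - 1‖ + ‖(1 : R)‖ := norm_add_le _ _
    _ ≤ ((1 + r) ^ l.length - 1) + 1 := add_le_add (List.norm_prod_sub_one_le hone h) hone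
    _ = (1 + r) ^ l.length := sub_add_cancel _ _

theorem List.norm_prod_append_sub_prod_le (hone : ‖(1 : R)‖ ≤ 1) {l₁ l₂ : List R}
    (h : ∀ a ∈ l₁ ++ l₂, ‖a - 1‖ ≤ r) :
    ‖(l₁ ++ l₂).prod - l₂.prod‖ ≤ (1 + r) ^ (l₁.length + l₂.length) - (1 + r) ^ l₂.length := by
  have h₁ := List.norm_prod_sub_one_le hone fun a ha ↦ h a (List.mem_append_left l₂ ha)
  have h₂ := List.norm_prod_le_one_add_pow hone fun a ha ↦ h a (List.mem_append_right l₁ ha)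
  calc ‖(l₁ ++ l₂).prod - l₂.prod‖ = ‖(l₁.prod - 1) * l₂.prod‖ := by
        rw [List.prod_append, sub_one_mul]
    _ ≤ ‖l₁.prod - 1‖ * ‖l₂.prod‖ := norm_mul_le _ _
    _ ≤ ((1 + r) ^ l₁.length - 1) * (1 + r) ^ l₂.length :=
        mul_le_mul h₁ h₂ (norm_nonneg _) ((norm_nonneg _).trans h₁)
    _ = (1 + r) ^ (l₁.length + l₂.length) - (1 + r) ^ l₂.length := by ring

end ListProd

open scoped Matrix.Norms.L2Operator

theorem matOpNorm_eq_norm (M : Matrix (Fin d) (Fin d) ℝ) : matOpNorm M = ‖M‖ := rfl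

theorem norm_applyM_le (M : Matrix (Fin d) (Fin d) ℝ) (g : EuclideanSpace ℝ (Fin d)) :
    ‖applyM M g‖ ≤ ‖M‖ * ‖g‖ :=
  ContinuousLinearMap.le_opNorm _ _

theorem l2_opNorm_one_le : ‖(1 : Matrix (Fin d) (Fin d) ℝ)‖ ≤ 1 := by
  rw [Matrix.cstar_norm_def, map_one]
  exact ContinuousLinearMap.norm_id_le

theorem mulList_zero_eq_prod_append (H : ℕ → Matrix (Fin d) (Fin d) ℝ) (α : ℝ) {L K : ℕ}
    (hL : L ≤ K) :
    mulList H α 0 K = ((List.range' 0 (K - L) ++ List.range' (K - L) L).map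
      fun k ↦ (1 : Matrix (Fin d) (Fin d) ℝ) - α • H k).prod := by
  have hsplit := List.range'_append_1 (s := 0) (m := K - L) (n := L)
  rw [zero_add, Nat.sub_add_cancel hL] at hsplit
  rw [mulList, hsplit]

theorem truncmaml_error_bound_smooth_general (K L : ℕ) (Hm : ℕ → Matrix (Fin d) (Fin d) ℝ) (α H : ℝ)
    (hnorm : ∀ k, matOpNorm (Hm k) ≤ H) (hα : 0 < α)
    (hL : L ≤ K) (g : EuclideanSpace ℝ (Fin d)) :
    ‖applyM (mulList Hm α 0 K) g - applyM (mulList Hm α (K - L) L) g‖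
      ≤ ((1 + α * H) ^ K - (1 + α * H) ^ L) * ‖g‖ := by
  have hfactor : ∀ k, ‖((1 : Matrix (Fin d) (Fin d) ℝ) - α • Hm k) - 1‖ ≤ α * H := fun k ↦ by
    rw [sub_sub_cancel_left, norm_neg, norm_smul, Real.norm_of_nonneg hα.le]
    exact mul_le_mul_of_nonneg_left (matOpNorm_eq_norm (Hm k) ▸ hnorm k) hα.le
  have hdiff := List.norm_prod_append_sub_prod_le l2_opNorm_one_le
    (l₁ := (List.range' 0 (K - L)).map fun k ↦ 1 - α • Hm k)
    (l₂ := (List.range' (K - L) L).map fun k ↦ 1 - α • Hm k)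
    (by rw [← List.map_append]; exact List.forall_mem_map.2 fun k _ ↦ hfactor k)
  rw [← List.map_append, ← mulList_zero_eq_prod_append Hm α hL] at hdiff
  simp only [List.length_map, List.length_range', Nat.sub_add_cancel hL] at hdiff
  calc ‖applyM (mulList Hm α 0 K) g - applyM (mulList Hm α (K - L) L) g‖
      = ‖applyM (mulList Hm α 0 K - mulList Hm α (K - L) L) g‖ := by simp [applyM]
    _ ≤ ‖mulList Hm α 0 K - mulList Hm α (K - L) L‖ * ‖g‖ := norm_applyM_le _ _
    _ ≤ ((1 + α * H) ^ K - (1 + α * H) ^ L) * ‖g‖ := by gcongr; exact hdiff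

/-- TruncMAML error bound under the Lipschitz-gradient assumption:
`‖∏_{k=0}^{K-1}(I - α H_k) g - ∏_{k=K-L}^{K-1}(I - α H_k) g‖ ≤ [(1+αH)^K - (1+αH)^L] ‖g‖`. -/
theorem truncmaml_error_bound_smooth (K L : ℕ) (Hm : ℕ → Matrix (Fin d) (Fin d) ℝ) (α H : ℝ)
    (hsymm : ∀ k, (Hm k).IsSymm) (hnorm : ∀ k, matOpNorm (Hm k) ≤ H) (hα : 0 < α)
    (hL : L ≤ K) (g : EuclideanSpace ℝ (Fin d)) :
    ‖applyM (mulList Hm α 0 K) g - applyM (mulList Hm α (K - L) L) g‖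
      ≤ ((1 + α * H) ^ K - (1 + α * H) ^ L) * ‖g‖ :=
  truncmaml_error_bound_smooth_general K L Hm α H hnorm hα hL g
end

section
/- Let H_0, ..., H_{K-1} be symmetric d×d matrices with ‖H_k‖ ≤ H, α > 0, g ∈ R^d, and 0 ≤ L ≤ K. Define the truncated binomial estimate Ĝ = [I + Σ_{l=1}^{L} Σ_{0≤k_1<...<k_l<K} ∏_{i=1}^{l}(-α H_{k_i})] g. Then ‖∏_{k=0}^{K-1}(I - α H_k) g - Ĝ‖ ≤ Σ_{l=L+1}^{K} C(K, l) (αH)^l ‖g‖. -/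
open Matrix Finset

variable {d : ℕ}

/-!
Writing `I - α H_k = I + A_k` with `A_k = -α H_k`, the ordered product `∏_k (I + A_k)` expands
(without commutativity) into the sum, over all subsets `t ⊆ {0, …, K-1}`, of the products of the
`A_k`, `k ∈ t`, in increasing order. The estimate `Ĝ` keeps exactly the subsets with `|t| ≤ L`, so
the error operator is the sum over `|t| > L`. By submultiplicativity of the operator norm each such
term has norm at most `(αH)^|t|`, and there are `C(K, l)` subsets of size `l`.
-/

theorem Finset.prod_sort_map_one_add {ι R : Type*} [LinearOrder ι] [Semiring R] (A : ι → R)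
    (s : Finset ι) :
    (s.sort.map (1 + A ·)).prod = ∑ t ∈ s.powerset, (t.sort.map A).prod := by
  induction s using Finset.induction_on_min with
  | empty => simp
  | insert a s has ih =>
    have ha : a ∉ s := fun h => lt_irrefl a (has a h)
    have hle : ∀ b ∈ s, a ≤ b := fun b hb => (has b hb).le
    rw [sum_powerset_insert ha, sort_insert _ hle ha, List.map_cons, List.prod_cons, ih, add_mul,
      one_mul, mul_sum]
    congr 1
    refine sum_congr rfl fun t ht => ?_
    have hts := mem_powerset.1 ht
    rw [sort_insert _ (fun b hb => hle b (hts hb)) (fun h => ha (hts h)), List.map_cons,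
      List.prod_cons]

theorem Finset.add_sum_Icc_powersetCard {ι M : Type*} [AddCommMonoid M] (F : Finset ι → M)
    (S : Finset ι) (L : ℕ) :
    F ∅ + ∑ l ∈ Icc 1 L, ∑ t ∈ S.powersetCard l, F t = ∑ t ∈ S.powerset with #t ≤ L, F t := by
  have hrange : range (L + 1) = insert 0 (Icc 1 L) := by ext; simp; omega
  calc F ∅ + ∑ l ∈ Icc 1 L, ∑ t ∈ S.powersetCard l, F t
      = ∑ l ∈ range (L + 1), ∑ t ∈ S.powersetCard l, F t := by
        rw [hrange, sum_insert (by simp), powersetCard_zero, sum_singleton]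
    _ = ∑ l ∈ range (L + 1), ∑ t ∈ S.powerset with #t ≤ L ∧ #t = l, F t := by
        refine sum_congr rfl fun l hl => sum_congr ?_ fun _ _ => rfl
        ext t
        simp only [mem_powersetCard, mem_filter, mem_powerset, mem_range] at hl ⊢
        exact ⟨fun ⟨hS, hl'⟩ => ⟨hS, by omega, hl'⟩, fun ⟨hS, _, hl'⟩ => ⟨hS, hl'⟩⟩
    _ = _ := by
        simp_rw [← filter_filter]
        exact sum_fiberwise_of_maps_to (fun t ht => mem_range.2 (by simp at ht; omega)) _

theorem List.norm_prod_map_le_pow {ι R : Type*} [SeminormedRing R] {A : ι → R} {c : ℝ}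
    {l : List ι} (hl : l ≠ []) (hA : ∀ a ∈ l, ‖A a‖ ≤ c) :
    ‖(l.map A).prod‖ ≤ c ^ l.length := by
  induction l with
  | nil => exact absurd rfl hl
  | cons a l ih =>
    rcases eq_or_ne l [] with rfl | hl'
    · simpa using hA a (by simp)
    rw [List.map_cons, List.prod_cons, List.length_cons, pow_succ']
    exact (norm_mul_le _ _).trans (mul_le_mul (hA a (by simp))
      (ih hl' fun b hb => hA b (by simp [hb])) (norm_nonneg _)
      ((norm_nonneg _).trans (hA a (by simp))))

theorem Finset.norm_sum_powerset_card_gt_le {ι R : Type*} [LinearOrder ι] [SeminormedRing R]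
    {A : ι → R} {c : ℝ} {S : Finset ι} (hA : ∀ a ∈ S, ‖A a‖ ≤ c) (L : ℕ) :
    ‖∑ t ∈ S.powerset with L < #t, (t.sort.map A).prod‖
      ≤ ∑ l ∈ Icc (L + 1) #S, ((#S).choose l : ℝ) * c ^ l := by
  have hterm : ∀ t ∈ {t ∈ S.powerset | L < #t}, ‖(t.sort.map A).prod‖ ≤ c ^ #t := by
    intro t ht
    obtain ⟨hts, hLt⟩ := mem_filter.1 ht
    rw [← length_sort (· ≤ ·)]
    exact List.norm_prod_map_le_pow (List.ne_nil_of_length_pos (by rw [length_sort]; omega))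
      fun a ha => hA a (mem_powerset.1 hts ((mem_sort _).1 ha))
  calc _ ≤ ∑ t ∈ S.powerset with L < #t, c ^ #t := (norm_sum_le _ _).trans (sum_le_sum hterm)
    _ = ∑ t ∈ S.powerset, if L < #t then c ^ #t else 0 := sum_filter _ _
    _ = _ := by
      rw [sum_powerset_apply_card (fun m => if L < m then c ^ m else 0)]
      simp_rw [smul_ite, smul_zero, ← sum_filter, nsmul_eq_mul]
      congr 1
      ext l; simp; omega

theorem mulList_zero_eq_sum_powerset (H : ℕ → Matrix (Fin d) (Fin d) ℝ) (α : ℝ) (K : ℕ) :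
    mulList H α 0 K = ∑ t ∈ (range K).powerset, (t.sort.map fun k => -(α • H k)).prod := by
  rw [mulList, ← List.range_eq_range', ← sort_range, ← prod_sort_map_one_add]
  simp_rw [sub_eq_add_neg]

theorem binomSum_eq_sum_powerset (H : ℕ → Matrix (Fin d) (Fin d) ℝ) (α : ℝ) (K L : ℕ) :
    binomSum H α K L
      = ∑ t ∈ (range K).powerset with #t ≤ L, (t.sort.map fun k => -(α • H k)).prod := by
  rw [binomSum, ← add_sum_Icc_powersetCard, sort_empty, List.map_nil, List.prod_nil]

theorem mulList_sub_binomSum (H : ℕ → Matrix (Fin d) (Fin d) ℝ) (α : ℝ) (K L : ℕ) :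
    mulList H α 0 K - binomSum H α K L
      = ∑ t ∈ (range K).powerset with L < #t, (t.sort.map fun k => -(α • H k)).prod := by
  rw [mulList_zero_eq_sum_powerset, binomSum_eq_sum_powerset, sub_eq_iff_eq_add',
    ← sum_filter_add_sum_filter_not _ (fun t => #t ≤ L)]
  simp_rw [not_le]

theorem matOpNorm_neg_smul_le {M : Matrix (Fin d) (Fin d) ℝ} {α c : ℝ} (hα : 0 ≤ α)
    (hM : matOpNorm M ≤ c) :
    matOpNorm (-(α • M)) ≤ α * c := by
  rw [matOpNorm, map_neg, map_smul, norm_neg, norm_smul, Real.norm_of_nonneg hα]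
  exact mul_le_mul_of_nonneg_left hM hα

theorem matOpNorm_mulList_sub_binomSum_le {H : ℕ → Matrix (Fin d) (Fin d) ℝ} {α c : ℝ}
    (hα : 0 ≤ α) (hH : ∀ k, matOpNorm (H k) ≤ c) (K L : ℕ) :
    matOpNorm (mulList H α 0 K - binomSum H α K L)
      ≤ ∑ l ∈ Icc (L + 1) K, (K.choose l : ℝ) * (α * c) ^ l := by
  rw [matOpNorm, mulList_sub_binomSum, map_sum]
  simp_rw [map_list_prod, List.map_map]
  have hbound :=
    norm_sum_powerset_card_gt_le (fun k (_ : k ∈ range K) => matOpNorm_neg_smul_le hα (hH k)) L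
  rwa [card_range] at hbound

theorem norm_applyM_sub_le (M N : Matrix (Fin d) (Fin d) ℝ) (g : EuclideanSpace ℝ (Fin d)) :
    ‖applyM M g - applyM N g‖ ≤ matOpNorm (M - N) * ‖g‖ := by
  rw [applyM, applyM, ← _root_.sub_apply, ← map_sub]
  exact ContinuousLinearMap.le_opNorm _ g

theorem binommaml_error_bound_smooth_general (K L : ℕ) (Hm : ℕ → Matrix (Fin d) (Fin d) ℝ) (α H : ℝ)
    (hnorm : ∀ k, matOpNorm (Hm k) ≤ H) (hα : 0 < α)
    (g : EuclideanSpace ℝ (Fin d)) :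
    ‖applyM (mulList Hm α 0 K) g - applyM (binomSum Hm α K L) g‖
      ≤ (∑ l ∈ Finset.Icc (L + 1) K, (K.choose l : ℝ) * (α * H) ^ l) * ‖g‖ :=
  (norm_applyM_sub_le _ _ g).trans <| mul_le_mul_of_nonneg_right
    (matOpNorm_mulList_sub_binomSum_le hα.le hnorm K L) (norm_nonneg g)

/-- BinomMAML error bound under the Lipschitz-gradient assumption:
`‖∏_{k=0}^{K-1}(I - α H_k) g - Ĝ‖ ≤ Σ_{l=L+1}^{K} C(K,l) (αH)^l ‖g‖`. -/
theorem binommaml_error_bound_smooth (K L : ℕ) (Hm : ℕ → Matrix (Fin d) (Fin d) ℝ) (α H : ℝ)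
    (hsymm : ∀ k, (Hm k).IsSymm) (hnorm : ∀ k, matOpNorm (Hm k) ≤ H) (hα : 0 < α)
    (hL : L ≤ K) (g : EuclideanSpace ℝ (Fin d)) :
    ‖applyM (mulList Hm α 0 K) g - applyM (binomSum Hm α K L) g‖
      ≤ (∑ l ∈ Finset.Icc (L + 1) K, (K.choose l : ℝ) * (α * H) ^ l) * ‖g‖ :=
  binommaml_error_bound_smooth_general K L Hm α H hnorm hα g
end

section
/- Let H_0, ..., H_{K-1} be symmetric d×d matrices with 0 ⪯ H_k ⪯ H·I, 0 < α ≤ 1/H, g ∈ R^d, and 1 ≤ L < K. Define Ĝ = [I + Σ_{l=1}^{L} Σ_{0≤k_1<...<k_l<K} ∏_{i=1}^{l}(-α H_{k_i})] g. Then ‖∏_{k=0}^{K-1}(I - α H_k) g - Ĝ‖ ≤ C(K, L+1)(αH)^{L+1} ‖g‖. -/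
open Matrix Finset

variable {d : ℕ}

/-!
Let `e_l(n)` be the sum, over `l`-element subsets of `{0, …, n-1}`, of the products of the
`A_k = -α H_k` taken in increasing order of `k`; `Ĝ` is `Σ_{l ≤ L} e_l(K) g`. Appending the
factor `1 + A_n` gives the Pascal-type recursion `e_{l+1}(n+1) = e_{l+1}(n) + e_l(n) A_n`, hence
the truncation error `E_n = ∏_{k<n} (1 + A_k) - Σ_{l ≤ L} e_l(n)` satisfies
`E_{n+1} = E_n (1 + A_n) + e_L(n) A_n` (unrolled, this is the telescoping decomposition of the
residual). Since `0 ⪯ α H_k ⪯ α H · I ⪯ I`, the spectral norms satisfy `‖A_k‖ ≤ α H` and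
`‖1 + A_k‖ ≤ 1`, and induction with Pascal's rule gives `‖e_l(n)‖ ≤ C(n, l) (α H)^l` and
`‖E_n‖ ≤ C(n, L + 1) (α H)^(L + 1)`.
-/

namespace Finset

theorem sort_insert_of_forall_lt {α : Type*} [LinearOrder α] {s : Finset α} {a : α}
    (h : ∀ b ∈ s, b < a) : (insert a s).sort (· ≤ ·) = s.sort (· ≤ ·) ++ [a] := by
  have ha : a ∉ s := fun has => lt_irrefl a (h a has)
  refine List.Perm.eq_of_pairwise' (r := (· ≤ ·)) (pairwise_sort _ _) ?_ ?_
  · exact List.pairwise_append.2 ⟨pairwise_sort _ _, by simp,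
      fun b hb c hc => (List.mem_singleton.1 hc) ▸ (h b ((mem_sort _).1 hb)).le⟩
  · rw [← Multiset.coe_eq_coe, sort_eq, insert_val_of_notMem ha, ← Multiset.coe_add, sort_eq,
      Multiset.coe_singleton, add_comm, Multiset.singleton_add]

theorem sum_powersetCard_succ_insert {α β : Type*} [DecidableEq α] [AddCommMonoid β]
    {s : Finset α} {a : α} (ha : a ∉ s) (n : ℕ) (f : Finset α → β) :
    ∑ t ∈ (insert a s).powersetCard (n + 1), f t =
      ∑ t ∈ s.powersetCard (n + 1), f t + ∑ t ∈ s.powersetCard n, f (insert a t) := by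
  rw [powersetCard_succ_insert ha, sum_union, sum_image]
  · exact insert_erase_invOn.2.injOn.mono fun t ht ↦ notMem_mono (mem_powersetCard.1 ht).1 ha
  · aesop (add simp [disjoint_left, insert_subset_iff, mem_powersetCard])

end Finset

section OrderedEsymm

variable {R : Type*}

def orderedEsymm [Ring R] (A : ℕ → R) (n l : ℕ) : R :=
  ∑ s ∈ (range n).powersetCard l, ((s.sort (· ≤ ·)).map A).prod

section Ring

variable [Ring R] (A : ℕ → R)

@[simp]
theorem orderedEsymm_zero_right (n : ℕ) : orderedEsymm A n 0 = 1 := by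
  simp [orderedEsymm]

@[simp]
theorem orderedEsymm_zero_succ (l : ℕ) : orderedEsymm A 0 (l + 1) = 0 := by
  rw [orderedEsymm, powersetCard_eq_empty.2 (by simp), sum_empty]

theorem orderedEsymm_succ_succ (n l : ℕ) :
    orderedEsymm A (n + 1) (l + 1) = orderedEsymm A n (l + 1) + orderedEsymm A n l * A n := by
  rw [orderedEsymm, range_add_one, sum_powersetCard_succ_insert notMem_range_self,
    orderedEsymm, orderedEsymm, sum_mul]
  congr 1
  refine sum_congr rfl fun s hs => ?_
  have hlt : ∀ b ∈ s, b < n := fun b hb => mem_range.1 ((mem_powersetCard.1 hs).1 hb)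
  rw [sort_insert_of_forall_lt hlt, List.map_append, List.prod_append, List.map_singleton,
    List.prod_singleton]

theorem sum_range_orderedEsymm_succ (n L : ℕ) :
    ∑ l ∈ range (L + 1), orderedEsymm A (n + 1) l
      = (∑ l ∈ range (L + 1), orderedEsymm A n l) * (1 + A n) - orderedEsymm A n L * A n := by
  induction L with
  | zero => simp
  | succ L ih =>
    rw [sum_range_succ, ih, orderedEsymm_succ_succ, sum_range_succ _ (L + 1)]
    noncomm_ring

theorem prod_range_one_add_sub_sum_orderedEsymm_succ (n L : ℕ) :
    ((List.range (n + 1)).map (1 + A ·)).prod - ∑ l ∈ range (L + 1), orderedEsymm A (n + 1) l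
      = (((List.range n).map (1 + A ·)).prod - ∑ l ∈ range (L + 1), orderedEsymm A n l)
          * (1 + A n) + orderedEsymm A n L * A n := by
  rw [List.range_succ, List.map_append, List.prod_append, List.map_singleton,
    List.prod_singleton, sum_range_orderedEsymm_succ]
  noncomm_ring

end Ring

section NormedRing

variable [NormedRing R] {A : ℕ → R} {a : ℝ}

-- `‖1‖ ≤ 1` rather than `NormOneClass R`, which fails for the zero ring of `0 × 0` matrices.
theorem norm_orderedEsymm_le (h1 : ‖(1 : R)‖ ≤ 1) (hA : ∀ k, ‖A k‖ ≤ a) :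
    ∀ n l, ‖orderedEsymm A n l‖ ≤ n.choose l * a ^ l
  | n, 0 => by simpa using h1
  | 0, l + 1 => by simp
  | n + 1, l + 1 => by
    have ha : 0 ≤ a := (norm_nonneg _).trans (hA 0)
    rw [orderedEsymm_succ_succ, Nat.choose_succ_succ', Nat.cast_add, add_mul]
    calc ‖orderedEsymm A n (l + 1) + orderedEsymm A n l * A n‖
        ≤ ‖orderedEsymm A n (l + 1)‖ + ‖orderedEsymm A n l‖ * ‖A n‖ :=
          (norm_add_le _ _).trans (add_le_add_right (norm_mul_le _ _) _)
      _ ≤ n.choose (l + 1) * a ^ (l + 1) + n.choose l * a ^ l * a := by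
          gcongr
          exacts [norm_orderedEsymm_le h1 hA n (l + 1), norm_orderedEsymm_le h1 hA n l, hA n]
      _ = _ := by ring

theorem norm_prod_range_one_add_sub_sum_orderedEsymm_le (h1 : ‖(1 : R)‖ ≤ 1)
    (hA : ∀ k, ‖A k‖ ≤ a) (hA1 : ∀ k, ‖1 + A k‖ ≤ 1) (L : ℕ) :
    ∀ n, ‖((List.range n).map (1 + A ·)).prod - ∑ l ∈ range (L + 1), orderedEsymm A n l‖
      ≤ n.choose (L + 1) * a ^ (L + 1)
  | 0 => by simp [sum_range_succ']
  | n + 1 => by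
    have ha : 0 ≤ a := (norm_nonneg _).trans (hA 0)
    rw [prod_range_one_add_sub_sum_orderedEsymm_succ, Nat.choose_succ_succ', Nat.cast_add, add_mul]
    set E := ((List.range n).map (1 + A ·)).prod - ∑ l ∈ range (L + 1), orderedEsymm A n l
    calc ‖E * (1 + A n) + orderedEsymm A n L * A n‖
        ≤ ‖E‖ * ‖1 + A n‖ + ‖orderedEsymm A n L‖ * ‖A n‖ :=
          (norm_add_le _ _).trans (add_le_add (norm_mul_le _ _) (norm_mul_le _ _))
      _ ≤ n.choose (L + 1) * a ^ (L + 1) * 1 + n.choose L * a ^ L * a := by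
          gcongr
          exacts [norm_prod_range_one_add_sub_sum_orderedEsymm_le h1 hA hA1 L n, hA1 n,
            norm_orderedEsymm_le h1 hA n L, hA n]
      _ = _ := by ring

end NormedRing

end OrderedEsymm

theorem ContinuousLinearMap.norm_le_of_isPositive_of_isPositive_sub {𝕜 E : Type*} [RCLike 𝕜]
    [NormedAddCommGroup E] [InnerProductSpace 𝕜 E] {T : E →L[𝕜] E} {c : ℝ} (hc : 0 ≤ c)
    (hT : T.IsPositive) (hcT : ((c : 𝕜) • 1 - T).IsPositive) : ‖T‖ ≤ c := by
  rw [T.norm_eq_iSup_rayleighQuotient hT.isSymmetric]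
  refine ciSup_le fun x => ?_
  have h0 : 0 ≤ T.reApplyInnerSelf x := hT.re_inner_nonneg_left x
  have hc' : T.reApplyInnerSelf x ≤ c * ‖x‖ ^ 2 := by
    have := hcT.re_inner_nonneg_left x
    simpa [reApplyInnerSelf_apply, inner_sub_left, inner_smul_left] using this
  rw [abs_of_nonneg (div_nonneg h0 (by positivity))]
  exact div_le_of_le_mul₀ (by positivity) hc hc'

open scoped Matrix.Norms.L2Operator ComplexOrder

theorem Matrix.isPositive_toEuclideanCLM_iff {𝕜 n : Type*} [RCLike 𝕜] [Fintype n] [DecidableEq n]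
    {M : Matrix n n 𝕜} : (toEuclideanCLM (n := n) (𝕜 := 𝕜) M).IsPositive ↔ M.PosSemidef := by
  rw [← ContinuousLinearMap.isPositive_toLinearMap_iff, ← isPositive_toEuclideanLin_iff]
  rfl

theorem Matrix.PosSemidef.l2_opNorm_le {𝕜 n : Type*} [RCLike 𝕜] [Fintype n] [DecidableEq n]
    {M : Matrix n n 𝕜} {c : ℝ} (hc : 0 ≤ c) (hM : M.PosSemidef)
    (hcM : ((c : 𝕜) • 1 - M).PosSemidef) : ‖M‖ ≤ c := by
  rw [← isPositive_toEuclideanCLM_iff] at hM hcM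
  rw [← l2_opNorm_toEuclideanCLM]
  refine ContinuousLinearMap.norm_le_of_isPositive_of_isPositive_sub hc hM ?_
  rwa [map_sub, map_smul, map_one] at hcM

theorem Matrix.l2_opNorm_one_le {𝕜 n : Type*} [RCLike 𝕜] [Fintype n] [DecidableEq n] :
    ‖(1 : Matrix n n 𝕜)‖ ≤ 1 := by
  rw [← l2_opNorm_toEuclideanCLM, map_one]
  exact ContinuousLinearMap.norm_id_le

theorem Matrix.PosSemidef.l2_opNorm_one_sub_smul_le_one {n : Type*} [Fintype n] [DecidableEq n]
    {M : Matrix n n ℝ} {α c : ℝ} (hα : 0 ≤ α) (hαc : α * c ≤ 1) (hM : M.PosSemidef)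
    (hcM : (c • 1 - M).PosSemidef) : ‖1 - α • M‖ ≤ 1 := by
  refine PosSemidef.l2_opNorm_le zero_le_one ?_ ?_
  · have h : 1 - α • M = (1 - α * c) • 1 + α • (c • 1 - M) := by
      rw [smul_sub, smul_smul, sub_smul, one_smul]
      abel
    rw [h]
    exact (PosSemidef.one.smul (sub_nonneg.2 hαc)).add (hcM.smul hα)
  · simpa using hM.smul hα

theorem mulList_zero_eq_prod_range (Hm : ℕ → Matrix (Fin d) (Fin d) ℝ) (α : ℝ) (K : ℕ) :
    mulList Hm α 0 K = ((List.range K).map (fun k => 1 + -(α • Hm k))).prod := by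
  simp only [mulList, List.range_eq_range', sub_eq_add_neg]

theorem binomSum_eq_sum_orderedEsymm (Hm : ℕ → Matrix (Fin d) (Fin d) ℝ) (α : ℝ) (K L : ℕ) :
    binomSum Hm α K L = ∑ l ∈ range (L + 1), orderedEsymm (fun k => -(α • Hm k)) K l := by
  rw [binomSum, sum_range_succ', orderedEsymm_zero_right, add_comm, ← Ico_add_one_right_eq_Icc,
    sum_Ico_eq_sum_range]
  simp only [add_tsub_cancel_right, add_comm 1]
  rfl

theorem binommaml_error_bound_convex_general (K L : ℕ) (Hm : ℕ → Matrix (Fin d) (Fin d) ℝ) (α H : ℝ)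
    (hpsd : ∀ k, (Hm k).PosSemidef)
    (hub : ∀ k, (H • (1 : Matrix (Fin d) (Fin d) ℝ) - Hm k).PosSemidef)
    (hH : 0 < H) (hα : 0 < α) (hαH : α ≤ 1 / H)
    (g : EuclideanSpace ℝ (Fin d)) :
    ‖applyM (mulList Hm α 0 K) g - applyM (binomSum Hm α K L) g‖
      ≤ (K.choose (L + 1) : ℝ) * (α * H) ^ (L + 1) * ‖g‖ := by
  have hαH_le_one : α * H ≤ 1 := (le_div_iff₀ hH).1 hαH
  have hA : ∀ k, ‖-(α • Hm k)‖ ≤ α * H := fun k => by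
    rw [norm_neg, norm_smul, Real.norm_of_nonneg hα.le]
    exact mul_le_mul_of_nonneg_left ((hpsd k).l2_opNorm_le hH.le (hub k)) hα.le
  have hA1 : ∀ k, ‖1 + -(α • Hm k)‖ ≤ 1 := fun k => by
    rw [← sub_eq_add_neg]
    exact (hpsd k).l2_opNorm_one_sub_smul_le_one hα.le hαH_le_one (hub k)
  calc ‖applyM (mulList Hm α 0 K) g - applyM (binomSum Hm α K L) g‖
      = ‖toEuclideanCLM (𝕜 := ℝ) (mulList Hm α 0 K - binomSum Hm α K L) g‖ := by
        simp [applyM]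
    _ ≤ ‖mulList Hm α 0 K - binomSum Hm α K L‖ * ‖g‖ := ContinuousLinearMap.le_opNorm _ g
    _ ≤ _ := by
        gcongr
        rw [mulList_zero_eq_prod_range, binomSum_eq_sum_orderedEsymm]
        exact norm_prod_range_one_add_sub_sum_orderedEsymm_le l2_opNorm_one_le hA hA1 L K

/-- BinomMAML error bound under convexity:
`‖∏_{k=0}^{K-1}(I - α H_k) g - Ĝ‖ ≤ C(K, L+1) (αH)^{L+1} ‖g‖` for `1 ≤ L < K`. -/
theorem binommaml_error_bound_convex (K L : ℕ) (Hm : ℕ → Matrix (Fin d) (Fin d) ℝ) (α H : ℝ)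
    (hpsd : ∀ k, (Hm k).PosSemidef)
    (hub : ∀ k, (H • (1 : Matrix (Fin d) (Fin d) ℝ) - Hm k).PosSemidef)
    (hH : 0 < H) (hα : 0 < α) (hαH : α ≤ 1 / H) (hL1 : 1 ≤ L) (hLK : L < K)
    (g : EuclideanSpace ℝ (Fin d)) :
    ‖applyM (mulList Hm α 0 K) g - applyM (binomSum Hm α K L) g‖
      ≤ (K.choose (L + 1) : ℝ) * (α * H) ^ (L + 1) * ‖g‖ :=
  binommaml_error_bound_convex_general K L Hm α H hpsd hub hH hα hαH g
end

section
/- Under the same setting (h·I ⪯ H_k ⪯ H·I for k ≥ K-M, ‖H_k‖ ≤ H otherwise, 0 < α ≤ 1/H, 0 < h ≤ H, M ≤ L ≤ K), the truncated estimate satisfies ‖∏_{k=0}^{K-1}(I - α H_k) g − ∏_{k=K-L}^{K-1}(I - α H_k) g‖ ≤ [(1+αH)^{K-M} − (1+αH)^{L-M}](1-αh)^M ‖g‖. -/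
open Matrix Finset

variable {d : ℕ}

/-! Splitting off the first `K - L` factors, the error is `(P - 1) v`, where `P` is the product of
the discarded factors and `v` the truncated estimate. Each discarded factor is within `αH` of the
identity, so expanding the product telescopically gives `‖P - 1‖ ≤ (1 + αH)^(K-L) - 1`. In `v`,
the factors with `k < K - M` have norm at most `1 + αH`, and the last `M` are sandwiched as
`0 ⪯ (1 - αH) I ⪯ I - αH_k ⪯ (1 - αh) I`, so their norm is at most `1 - αh`: for a symmetric
matrix the operator norm is the largest absolute value of its Rayleigh quotient. -/

open scoped RealInnerProductSpace

section ListProd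

variable {𝕜 E : Type*} [NontriviallyNormedField 𝕜] [SeminormedAddCommGroup E] [NormedSpace 𝕜 E]

theorem ContinuousLinearMap.norm_list_prod_apply_le {l : List (E →L[𝕜] E)} {c : ℝ} (hc : 0 ≤ c)
    (hl : ∀ T ∈ l, ‖T‖ ≤ c) (x : E) : ‖l.prod x‖ ≤ c ^ l.length * ‖x‖ := by
  induction l with
  | nil => simp
  | cons T l ih =>
    rw [List.forall_mem_cons] at hl
    calc ‖(T :: l).prod x‖ = ‖T (l.prod x)‖ := rfl
      _ ≤ c * (c ^ l.length * ‖x‖) :=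
        (T.le_of_opNorm_le hl.1 _).trans (mul_le_mul_of_nonneg_left (ih hl.2) hc)
      _ = c ^ (T :: l).length * ‖x‖ := by rw [List.length_cons, pow_succ]; ring

theorem ContinuousLinearMap.norm_list_prod_apply_sub_self_le {l : List (E →L[𝕜] E)} {β : ℝ}
    (hβ : 0 ≤ β) (hl : ∀ T ∈ l, ‖T - 1‖ ≤ β) (x : E) :
    ‖l.prod x - x‖ ≤ ((1 + β) ^ l.length - 1) * ‖x‖ := by
  induction l with
  | nil => simp
  | cons T l ih =>
    rw [List.forall_mem_cons] at hl
    have hnorm : ∀ S ∈ l, ‖S‖ ≤ 1 + β := fun S hS =>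
      calc ‖S‖ = ‖(S - 1) + 1‖ := by rw [sub_add_cancel]
        _ ≤ β + 1 := norm_add_le_of_le (hl.2 S hS) norm_id_le
        _ = 1 + β := add_comm _ _
    have hsplit : (T :: l).prod x - x = (T - 1) (l.prod x) + (l.prod x - x) := by
      rw [List.prod_cons, mul_def, comp_apply, _root_.sub_apply, one_apply_eq_self]
      abel
    calc ‖(T :: l).prod x - x‖ ≤ ‖(T - 1) (l.prod x)‖ + ‖l.prod x - x‖ :=
          hsplit ▸ norm_add_le _ _
      _ ≤ β * ((1 + β) ^ l.length * ‖x‖) + ((1 + β) ^ l.length - 1) * ‖x‖ :=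
        add_le_add (((T - 1).le_of_opNorm_le hl.1 _).trans <| mul_le_mul_of_nonneg_left
          (norm_list_prod_apply_le (by linarith) hnorm x) hβ) (ih hl.2)
      _ = ((1 + β) ^ (T :: l).length - 1) * ‖x‖ := by rw [List.length_cons, pow_succ]; ring

end ListProd

theorem Matrix.norm_toEuclideanCLM_le_of_posSemidef {n : Type*} [Fintype n] [DecidableEq n]
    {A : Matrix n n ℝ} {c : ℝ} (hc : 0 ≤ c) (hA : A.PosSemidef) (hcA : (c • 1 - A).PosSemidef) :
    ‖toEuclideanCLM (𝕜 := ℝ) A‖ ≤ c := by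
  set T := toEuclideanCLM (𝕜 := ℝ) A
  have hT : (T : EuclideanSpace ℝ n →ₗ[ℝ] EuclideanSpace ℝ n).IsSymmetric := by
    rw [coe_toEuclideanCLM_eq_toEuclideanLin, isSymmetric_toEuclideanLin_iff]
    exact hA.isHermitian
  have hlow : ∀ x, 0 ≤ ⟪T x, x⟫ := fun x => (isPositive_toEuclideanLin_iff.mpr hA).2 x
  have hup : ∀ x, ⟪T x, x⟫ ≤ c * ‖x‖ ^ 2 := fun x => by
    have := (isPositive_toEuclideanLin_iff.mpr hcA).2 x
    rw [← coe_toEuclideanCLM_eq_toEuclideanLin, map_sub, map_smul, map_one] at this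
    simpa [inner_sub_left, real_inner_smul_left] using this
  rw [T.norm_eq_iSup_rayleighQuotient hT]
  refine ciSup_le fun x => ?_
  rw [ContinuousLinearMap.rayleighQuotient, ContinuousLinearMap.reApplyInnerSelf_apply]
  rcases eq_or_ne x 0 with rfl | hx
  · simpa using hc
  rw [RCLike.re_to_real, abs_of_nonneg (div_nonneg (hlow x) (sq_nonneg _)),
    div_le_iff₀ (by positivity)]
  exact hup x

theorem matOpNorm_one_sub_smul_le {A : Matrix (Fin d) (Fin d) ℝ} {α h H : ℝ} (hα : 0 ≤ α)
    (hαH : α * H ≤ 1) (hhH : h ≤ H) (hlow : (A - h • 1).PosSemidef)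
    (hup : (H • 1 - A).PosSemidef) : matOpNorm (1 - α • A) ≤ 1 - α * h := by
  have hαh : α * h ≤ 1 := (mul_le_mul_of_nonneg_left hhH hα).trans hαH
  refine norm_toEuclideanCLM_le_of_posSemidef (by linarith) ?_ ?_
  · have hsplit :
        1 - α • A = (1 - α * H) • (1 : Matrix (Fin d) (Fin d) ℝ) + α • (H • 1 - A) := by module
    rw [hsplit]
    exact (PosSemidef.one.smul (by linarith)).add (hup.smul hα)
  · have hsplit :
        (1 - α * h) • 1 - (1 - α • A) = α • (A - h • (1 : Matrix (Fin d) (Fin d) ℝ)) := by module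
    rw [hsplit]
    exact hlow.smul hα

theorem applyM_mul (A B : Matrix (Fin d) (Fin d) ℝ) (g : EuclideanSpace ℝ (Fin d)) :
    applyM (A * B) g = applyM A (applyM B g) := by
  rw [applyM, map_mul]
  rfl

theorem matOpNorm_smul (c : ℝ) (A : Matrix (Fin d) (Fin d) ℝ) :
    matOpNorm (c • A) = |c| * matOpNorm A := by
  rw [matOpNorm, map_smul, norm_smul, Real.norm_eq_abs]
  rfl

theorem matOpNorm_one_sub_le {A : Matrix (Fin d) (Fin d) ℝ} {β : ℝ} (hA : matOpNorm A ≤ β) :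
    matOpNorm (1 - A) ≤ 1 + β := by
  rw [matOpNorm, map_sub, map_one]
  exact norm_sub_le_of_le ContinuousLinearMap.norm_id_le hA

section MulList

variable {H : ℕ → Matrix (Fin d) (Fin d) ℝ} {α : ℝ}

theorem mulList_add (a m n : ℕ) :
    mulList H α a (m + n) = mulList H α a m * mulList H α (a + m) n := by
  rw [mulList, ← List.range'_append_1, List.map_append, List.prod_append]
  rfl

theorem mulList_eq_mul_mulList {a b m n p : ℕ} (hb : a + m = b) (hp : m + n = p) :
    mulList H α a p = mulList H α a m * mulList H α b n := by
  subst hb hp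
  exact mulList_add a m n

theorem toEuclideanCLM_mulList (a n : ℕ) :
    toEuclideanCLM (𝕜 := ℝ) (mulList H α a n)
      = ((List.range' a n).map fun k => toEuclideanCLM (𝕜 := ℝ) (1 - α • H k)).prod := by
  rw [mulList, map_list_prod, List.map_map]
  rfl

theorem norm_applyM_mulList_le {a n : ℕ} {c : ℝ} (hc : 0 ≤ c)
    (h : ∀ k, a ≤ k → k < a + n → matOpNorm (1 - α • H k) ≤ c) (g : EuclideanSpace ℝ (Fin d)) :
    ‖applyM (mulList H α a n) g‖ ≤ c ^ n * ‖g‖ := by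
  rw [applyM, toEuclideanCLM_mulList]
  refine (ContinuousLinearMap.norm_list_prod_apply_le hc ?_ g).trans_eq
    (by rw [List.length_map, List.length_range'])
  intro T hT
  obtain ⟨k, hk, rfl⟩ := List.mem_map.mp hT
  exact h k (List.mem_range'_1.mp hk).1 (List.mem_range'_1.mp hk).2

theorem norm_applyM_mulList_sub_self_le {a n : ℕ} {β : ℝ} (hβ : 0 ≤ β)
    (h : ∀ k, a ≤ k → k < a + n → matOpNorm (α • H k) ≤ β) (g : EuclideanSpace ℝ (Fin d)) :
    ‖applyM (mulList H α a n) g - g‖ ≤ ((1 + β) ^ n - 1) * ‖g‖ := by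
  rw [applyM, toEuclideanCLM_mulList]
  refine (ContinuousLinearMap.norm_list_prod_apply_sub_self_le hβ ?_ g).trans_eq
    (by rw [List.length_map, List.length_range'])
  intro T hT
  obtain ⟨k, hk, rfl⟩ := List.mem_map.mp hT
  rw [map_sub, map_one, sub_sub_cancel_left, norm_neg]
  exact h k (List.mem_range'_1.mp hk).1 (List.mem_range'_1.mp hk).2

end MulList

theorem truncmaml_error_bound_strong_convex_general (K L M : ℕ) (Hm : ℕ → Matrix (Fin d) (Fin d) ℝ)
    (α H h : ℝ)
    (hstrong : ∀ k, K - M ≤ k → k < K →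
      (Hm k - h • (1 : Matrix (Fin d) (Fin d) ℝ)).PosSemidef ∧
      (H • (1 : Matrix (Fin d) (Fin d) ℝ) - Hm k).PosSemidef)
    (hbdd : ∀ k, k < K - M → matOpNorm (Hm k) ≤ H)
    (hα : 0 < α) (hαH : α ≤ 1 / H) (hhH : h ≤ H)
    (hML : M ≤ L) (hLK : L ≤ K) (g : EuclideanSpace ℝ (Fin d)) :
    ‖applyM (mulList Hm α 0 K) g - applyM (mulList Hm α (K - L) L) g‖
      ≤ ((1 + α * H) ^ (K - M) - (1 + α * H) ^ (L - M)) * (1 - α * h) ^ M * ‖g‖ := by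
  have hH : 0 < H := one_div_pos.mp (hα.trans_le hαH)
  have hαH₁ : α * H ≤ 1 := (le_div_iff₀ hH).mp hαH
  have hαh₁ : 0 ≤ 1 - α * h := by nlinarith
  have hexpand : ∀ k, k < K - M → matOpNorm (α • Hm k) ≤ α * H := fun k hk => by
    rw [matOpNorm_smul, abs_of_pos hα]
    exact mul_le_mul_of_nonneg_left (hbdd k hk) hα.le
  have hcontract : ∀ k, K - M ≤ k → k < K → matOpNorm (1 - α • Hm k) ≤ 1 - α * h :=
    fun k hk₁ hk₂ => matOpNorm_one_sub_smul_le hα.le hαH₁ hhH (hstrong k hk₁ hk₂).1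
      (hstrong k hk₁ hk₂).2
  have htrunc : ‖applyM (mulList Hm α (K - L) L) g‖
      ≤ (1 + α * H) ^ (L - M) * ((1 - α * h) ^ M * ‖g‖) := by
    rw [mulList_eq_mul_mulList (a := K - L) (p := L) (m := L - M) (b := K - M) (n := M) (by omega)
      (by omega), applyM_mul]
    refine (norm_applyM_mulList_le (by positivity)
      (fun k _ hk => matOpNorm_one_sub_le (hexpand k (by omega))) _).trans ?_
    gcongr
    exact norm_applyM_mulList_le hαh₁ (fun k hk₁ hk₂ => hcontract k hk₁ (by omega)) g
  rw [mulList_eq_mul_mulList (a := 0) (p := K) (m := K - L) (b := K - L) (n := L) (by omega)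
    (by omega), applyM_mul]
  calc _ ≤ ((1 + α * H) ^ (K - L) - 1) * ‖applyM (mulList Hm α (K - L) L) g‖ :=
        norm_applyM_mulList_sub_self_le (by positivity) (fun k _ hk => hexpand k (by omega)) _
    _ ≤ ((1 + α * H) ^ (K - L) - 1) * ((1 + α * H) ^ (L - M) * ((1 - α * h) ^ M * ‖g‖)) := by
        gcongr
        exact sub_nonneg.mpr (one_le_pow₀ (le_add_of_nonneg_right (by positivity)))
    _ = ((1 + α * H) ^ (K - M) - (1 + α * H) ^ (L - M)) * (1 - α * h) ^ M * ‖g‖ := by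
        rw [show K - M = K - L + (L - M) by omega, pow_add]
        ring

/-- TruncMAML error bound under local strong convexity:
`‖∏_{k=0}^{K-1}(I-αH_k) g - ∏_{k=K-L}^{K-1}(I-αH_k) g‖
  ≤ [(1+αH)^{K-M} - (1+αH)^{L-M}] (1-αh)^M ‖g‖`. -/
theorem truncmaml_error_bound_strong_convex (K L M : ℕ) (Hm : ℕ → Matrix (Fin d) (Fin d) ℝ)
    (α H h : ℝ) (hsymm : ∀ k, (Hm k).IsSymm)
    (hstrong : ∀ k, K - M ≤ k → k < K →
      (Hm k - h • (1 : Matrix (Fin d) (Fin d) ℝ)).PosSemidef ∧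
      (H • (1 : Matrix (Fin d) (Fin d) ℝ) - Hm k).PosSemidef)
    (hbdd : ∀ k, k < K - M → matOpNorm (Hm k) ≤ H)
    (hα : 0 < α) (hαH : α ≤ 1 / H) (hh : 0 < h) (hhH : h ≤ H)
    (hM1 : 1 ≤ M) (hML : M ≤ L) (hLK : L ≤ K) (g : EuclideanSpace ℝ (Fin d)) :
    ‖applyM (mulList Hm α 0 K) g - applyM (mulList Hm α (K - L) L) g‖
      ≤ ((1 + α * H) ^ (K - M) - (1 + α * H) ^ (L - M)) * (1 - α * h) ^ M * ‖g‖ :=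
  truncmaml_error_bound_strong_convex_general K L M Hm α H h hstrong hbdd hα hαH hhH hML hLK g
end

section
/- For real numbers α, H with 0 < α ≤ L/(e(K-1)H), and naturals 1 ≤ L < K and 1 ≤ M, the quantity (αH)^{L+1} Σ_{l=1}^{M} C(K-l, L)(1-αh)^{l-1} is bounded above by (H/h)·[αH·e(K-1)/L]^L·[1 − (1-αh)^M], for any 0 < αh < 1. -/
/-- `(αH)^{L+1} Σ_{l=1}^{M} C(K-l,L)(1-αh)^{l-1}
  ≤ (H/h) [αH e(K-1)/L]^L [1 - (1-αh)^M]`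
for `0 < α ≤ L/(e(K-1)H)`, `1 ≤ L < K`, `1 ≤ M`, and `0 < αh < 1`. -/
theorem binom_strong_convex_first_term_bound (α H h : ℝ) (K L M : ℕ)
    (hα : 0 < α) (hH : 0 < H) (hL : 1 ≤ L) (hLK : L < K) (hM : 1 ≤ M)
    (hαh : 0 < α * h) (hαh1 : α * h < 1)
    (hcond : α ≤ L / (Real.exp 1 * ((K : ℝ) - 1) * H)) :
    (α * H) ^ (L + 1) * ∑ l ∈ Finset.Icc 1 M, ((K - l).choose L : ℝ) * (1 - α * h) ^ (l - 1)
      ≤ (H / h) * (α * H * (Real.exp 1 * ((K : ℝ) - 1) / L)) ^ L * (1 - (1 - α * h) ^ M) := by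
  set q : ℝ := 1 - α * h with hq
  have hq0 : 0 ≤ q := by simp [hq]; linarith
  have hq1 : q < 1 := by simp [hq]; linarith
  have hK1 : 1 ≤ K := le_of_lt (lt_of_le_of_lt hL hLK)
  have hL0 : (0:ℝ) < L := by exact_mod_cast hL
  have hKR : (1:ℝ) ≤ (K:ℝ) - 1 := by
    have : (2:ℕ) ≤ K := by omega
    have : (2:ℝ) ≤ (K:ℝ) := by exact_mod_cast this
    linarith
  set C : ℝ := Real.exp 1 * ((K : ℝ) - 1) / L with hCdef
  have hCpos : 0 < C := by
    apply div_pos (mul_pos (Real.exp_pos 1) (by linarith)) hL0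
  clear_value C
  -- binomial bound
  have hC : ∀ l ∈ Finset.Icc 1 M, ((K - l).choose L : ℝ) ≤ C ^ L := by
    intro l hl
    rw [Finset.mem_Icc] at hl
    have h1 : (K - l).choose L ≤ (K - 1).choose L :=
      Nat.choose_le_choose L (by omega)
    have h2 : ((K - 1).choose L : ℝ) ≤ ((K:ℝ) - 1) ^ L / (L.factorial : ℝ) := by
      have := Nat.choose_le_pow_div (α := ℝ) L (K - 1)
      have hc : ((K - 1 : ℕ) : ℝ) = (K:ℝ) - 1 := by
        push_cast [Nat.cast_sub hK1]; ring
      rw [hc] at this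
      exact this
    have h3 : ((K:ℝ) - 1) ^ L / (L.factorial : ℝ) ≤ C ^ L := by
      have hfac : (0:ℝ) < (L.factorial : ℝ) := by exact_mod_cast L.factorial_pos
      have hexp : (L:ℝ) ^ L / (L.factorial : ℝ) ≤ Real.exp L :=
        Real.pow_div_factorial_le_exp (x:=(L:ℝ)) (le_of_lt hL0) L
      have hexpL : Real.exp (L:ℝ) = (Real.exp 1) ^ L := by
        rw [← Real.exp_nat_mul]; ring_nf
      -- C^L = e^L (K-1)^L / L^L
      have hCL : C ^ L = (Real.exp 1) ^ L * ((K:ℝ) - 1) ^ L / (L:ℝ) ^ L := by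
        rw [hCdef, div_pow, mul_pow]
      rw [hCL]
      rw [div_le_div_iff₀ hfac (by positivity)]
      have key : (L:ℝ) ^ L ≤ (Real.exp 1) ^ L * (L.factorial : ℝ) := by
        rw [← hexpL]
        calc (L:ℝ) ^ L = (L:ℝ) ^ L / (L.factorial : ℝ) * (L.factorial : ℝ) := by
              field_simp
          _ ≤ Real.exp L * (L.factorial : ℝ) := by
              apply mul_le_mul_of_nonneg_right hexp (le_of_lt hfac)
      calc ((K:ℝ) - 1) ^ L * (L:ℝ) ^ L
          ≤ ((K:ℝ) - 1) ^ L * ((Real.exp 1) ^ L * (L.factorial : ℝ)) := by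
            apply mul_le_mul_of_nonneg_left key (by positivity)
        _ = (Real.exp 1) ^ L * ((K:ℝ) - 1) ^ L * (L.factorial : ℝ) := by ring
    calc ((K - l).choose L : ℝ) ≤ ((K - 1).choose L : ℝ) := by exact_mod_cast h1
      _ ≤ ((K:ℝ) - 1) ^ L / (L.factorial : ℝ) := h2
      _ ≤ C ^ L := h3
  -- sum bound
  have hsum : ∑ l ∈ Finset.Icc 1 M, ((K - l).choose L : ℝ) * q ^ (l - 1)
      ≤ C ^ L * ((1 - q ^ M) / (α * h)) := by
    have h1 : ∑ l ∈ Finset.Icc 1 M, ((K - l).choose L : ℝ) * q ^ (l - 1)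
        ≤ ∑ l ∈ Finset.Icc 1 M, C ^ L * q ^ (l - 1) := by
      apply Finset.sum_le_sum
      intro l hl
      exact mul_le_mul_of_nonneg_right (hC l hl) (pow_nonneg hq0 _)
    have h2 : ∑ l ∈ Finset.Icc 1 M, C ^ L * q ^ (l - 1)
        = C ^ L * ∑ i ∈ Finset.range M, q ^ i := by
      rw [← Finset.mul_sum]
      congr 1
      rw [Finset.range_eq_Ico]
      rw [show Finset.Icc 1 M = Finset.Ico 1 (M+1) by rfl]
      rw [Finset.sum_Ico_eq_sum_range]
      simp
    have h3 : ∑ i ∈ Finset.range M, q ^ i = (1 - q ^ M) / (α * h) := by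
      have : q ≠ 1 := ne_of_lt hq1
      rw [geom_sum_eq this]
      rw [show q - 1 = -(α * h) by rw [hq]; ring]
      rw [div_neg]; ring
    rw [h2, h3] at h1
    exact h1
  -- combine
  have hpow : 0 ≤ (α * H) ^ (L + 1) := by positivity
  calc (α * H) ^ (L + 1) * ∑ l ∈ Finset.Icc 1 M, ((K - l).choose L : ℝ) * q ^ (l - 1)
      ≤ (α * H) ^ (L + 1) * (C ^ L * ((1 - q ^ M) / (α * h))) :=
        mul_le_mul_of_nonneg_left hsum hpow
    _ = (α * H) ^ L * C ^ L * ((α * H) / (α * h)) * (1 - q ^ M) := by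
        rw [pow_succ]; ring
    _ = (H / h) * (α * H * C) ^ L * (1 - q ^ M) := by
        rw [mul_div_mul_left H h (ne_of_gt hα), mul_pow]; ring
end
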